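/- Let A = [[A11, A12, 0],[A21, a22, A23],[0, A32, A33]] be a real matrix where A11 is m1×n1, A33 is m2×n2, a22 is a scalar, A12 is m1×1, A21 is 1×n1, A23 is 1×n2, A32 is m2×1. Suppose there exists x in ker(A11 ⊕ A33) with [A21 A23] x ≠ 0 and there exists y in ker((A11 ⊕ A33)^T) with y^T [A12; A32] ≠ 0. Then rank(A) = rank(A11) + rank(A33) + 2. -/

import Mathlib

/-!
Swapping the middle block row and column to the end turns the matrix into the bordered matrix
`[[B, c], [r, a22]]` with `B = A11 ⊕ A33`, `c = [A12; A32]`, `r = [A21 A23]`. Since `yᵀ B = 0` but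
`yᵀ c ≠ 0`, the column `c` is not in the column space of `B`, so appending it raises the rank by
one. Then `(x, 0)` is killed by `[B c]` but not by `[r a22]`, so that row is not in the row space
of `[B c]` and appending it raises the rank by one more. Finally, the rank of a block-diagonal
matrix is the sum of the ranks of its blocks.
-/

open Matrix Module Submodule

theorem LinearMap.finrank_range_prodMap {K V V' W W' : Type*} [Field K] [AddCommGroup V]
    [Module K V] [AddCommGroup V'] [Module K V'] [AddCommGroup W] [Module K W] [AddCommGroup W']
    [Module K W'] [FiniteDimensional K W] [FiniteDimensional K W'] (f : V →ₗ[K] W)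
    (g : V' →ₗ[K] W') :
    finrank K (range (f.prodMap g)) = finrank K (range f) + finrank K (range g) := by
  have hrange : range (f.prodMap g) = range ((range f).subtype.prodMap (range g).subtype) := by
    simp only [range_prodMap, Submodule.range_subtype]
  rw [hrange, finrank_range_of_inj, finrank_prod]
  exact (injective_subtype _).prodMap (injective_subtype _)

namespace Matrix

variable {K : Type*} [Field K] {m n m' n' : Type*} [Fintype m] [Fintype n] [Fintype m'] [Fintype n']

theorem rank_fromBlocks_zero_zero (A : Matrix m n K) (D : Matrix m' n' K) :
    (fromBlocks A 0 0 D).rank = A.rank + D.rank := by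
  have hconj : (fromBlocks A 0 0 D).mulVecLin =
      (LinearEquiv.sumArrowLequivProdArrow m m' K K).symm.toLinearMap ∘ₗ
        A.mulVecLin.prodMap D.mulVecLin ∘ₗ (LinearEquiv.sumArrowLequivProdArrow n n' K K) := by
    ext v (i | i) <;>
      simp only [mulVecLin_apply, fromBlocks_mulVec, zero_mulVec, add_zero, zero_add, Sum.elim_inl,
        Sum.elim_inr, LinearMap.comp_apply, LinearEquiv.coe_coe, LinearMap.prodMap_apply,
        LinearEquiv.sumArrowLequivProdArrow_symm_apply_inl,
        LinearEquiv.sumArrowLequivProdArrow_symm_apply_inr] <;> rfl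
  rw [rank, hconj, LinearMap.range_comp, LinearEquiv.range_comp, LinearEquiv.finrank_map_eq,
    LinearMap.finrank_range_prodMap, rank, rank]

theorem col_notMem_span_range_col_of_vecMul_eq_zero (B : Matrix m n K) (c : Matrix m (Fin 1) K)
    {y : m → K} (hyB : y ᵥ* B = 0) (hyc : y ᵥ* c ≠ 0) :
    c.col 0 ∉ span K (Set.range B.col) := by
  rw [← range_mulVecLin]
  rintro ⟨u, hu⟩
  refine hyc (funext fun k => ?_)
  obtain rfl := Subsingleton.elim k 0
  calc (y ᵥ* c) 0 = y ⬝ᵥ B *ᵥ u := by rw [← mulVecLin_apply, hu]; rfl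
    _ = 0 := by rw [dotProduct_mulVec, hyB, zero_dotProduct]

theorem rank_fromCols_of_vecMul_eq_zero (B : Matrix m n K) (c : Matrix m (Fin 1) K)
    {y : m → K} (hyB : y ᵥ* B = 0) (hyc : y ᵥ* c ≠ 0) :
    (fromCols B c).rank = B.rank + 1 := by
  have hcols : (fromCols B c).col = Sum.elim B.col c.col := by ext (j | j) i <;> rfl
  rw [rank_eq_finrank_span_cols, rank_eq_finrank_span_cols, hcols, Set.Sum.elim_range,
    Set.range_unique (f := c.col), span_union]
  exact finrank_sup_span_singleton (col_notMem_span_range_col_of_vecMul_eq_zero B c hyB hyc)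

theorem rank_fromRows_of_mulVec_eq_zero (B : Matrix m n K) (r : Matrix (Fin 1) n K)
    {x : n → K} (hBx : B *ᵥ x = 0) (hrx : r *ᵥ x ≠ 0) :
    (fromRows B r).rank = B.rank + 1 := by
  rw [← rank_transpose, transpose_fromRows, ← rank_transpose B,
    rank_fromCols_of_vecMul_eq_zero (y := x) Bᵀ rᵀ] <;> simpa [vecMul_transpose]

theorem rank_fromBlocks_of_mulVec_eq_zero_of_vecMul_eq_zero (B : Matrix m n K)
    (c : Matrix m (Fin 1) K) (r : Matrix (Fin 1) n K) (a : Matrix (Fin 1) (Fin 1) K)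
    {x : n → K} (hBx : B *ᵥ x = 0) (hrx : r *ᵥ x ≠ 0)
    {y : m → K} (hyB : y ᵥ* B = 0) (hyc : y ᵥ* c ≠ 0) :
    (fromBlocks B c r a).rank = B.rank + 2 := by
  rw [← fromRows_fromCols_eq_fromBlocks, rank_fromRows_of_mulVec_eq_zero (x := Sum.elim x 0),
    rank_fromCols_of_vecMul_eq_zero B c hyB hyc]
  all_goals simpa [fromCols_mulVec_sumElim]

end Matrix

def Equiv.sumRightComm (α β γ : Type*) : (α ⊕ β) ⊕ γ ≃ (α ⊕ γ) ⊕ β :=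
  (sumAssoc α β γ).trans ((sumCongr (Equiv.refl α) (sumComm β γ)).trans (sumAssoc α γ β).symm)

theorem Matrix.submatrix_sumRightComm_fromBlocks_fromBlocks {α r₁ r₂ r₃ c₁ c₂ c₃ : Type*}
    (P : Matrix r₁ c₁ α) (Q : Matrix r₁ c₂ α) (R : Matrix r₂ c₁ α) (S : Matrix r₂ c₂ α)
    (T : Matrix r₁ c₃ α) (U : Matrix r₂ c₃ α) (V : Matrix r₃ c₁ α) (W : Matrix r₃ c₂ α)
    (X : Matrix r₃ c₃ α) :
    (fromBlocks (fromBlocks P Q R S) (fromRows T U) (fromCols V W) X).submatrix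
        (Equiv.sumRightComm r₁ r₃ r₂) (Equiv.sumRightComm c₁ c₃ c₂) =
      fromBlocks (fromBlocks P T V X) (fromRows Q W) (fromCols R U) S := by
  ext ((i | i) | i) ((j | j) | j) <;> rfl

/-- Case (iv) of the decomposition lemma: if some `x ∈ ker(A11 ⊕ A33)` has
`[A21 A23] x ≠ 0` and some `y ∈ ker((A11 ⊕ A33)ᵀ)` has `yᵀ [A12; A32] ≠ 0`,
then `rank A = rank A11 + rank A33 + 2`. -/
theorem rank_one_separation_plus_two (m1 n1 m2 n2 : ℕ)
    (A11 : Matrix (Fin m1) (Fin n1) ℝ) (A12 : Matrix (Fin m1) (Fin 1) ℝ)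
    (A21 : Matrix (Fin 1) (Fin n1) ℝ) (a22 : ℝ)
    (A23 : Matrix (Fin 1) (Fin n2) ℝ) (A32 : Matrix (Fin m2) (Fin 1) ℝ)
    (A33 : Matrix (Fin m2) (Fin n2) ℝ)
    (h1 : ∃ x : Fin n1 ⊕ Fin n2 → ℝ,
      Matrix.mulVec (Matrix.fromBlocks A11 0 0 A33) x = 0 ∧
        Matrix.mulVec (Matrix.fromCols A21 A23) x ≠ 0)
    (h2 : ∃ y : Fin m1 ⊕ Fin m2 → ℝ,
      Matrix.vecMul y (Matrix.fromBlocks A11 0 0 A33) = 0 ∧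
        Matrix.vecMul y (Matrix.fromRows A12 A32) ≠ 0) :
    (Matrix.fromBlocks
        (Matrix.fromBlocks A11 A12 A21 (Matrix.of fun (_ : Fin 1) (_ : Fin 1) => a22))
        (Matrix.fromRows (0 : Matrix (Fin m1) (Fin n2) ℝ) A23)
        (Matrix.fromCols (0 : Matrix (Fin m2) (Fin n1) ℝ) A32) A33).rank =
      A11.rank + A33.rank + 2 := by
  obtain ⟨x, hBx, hrx⟩ := h1
  obtain ⟨y, hyB, hyc⟩ := h2
  rw [← rank_submatrix _ (Equiv.sumRightComm _ _ _) (Equiv.sumRightComm _ _ _),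
    submatrix_sumRightComm_fromBlocks_fromBlocks,
    rank_fromBlocks_of_mulVec_eq_zero_of_vecMul_eq_zero _ _ _ _ hBx hrx hyB hyc,
    rank_fromBlocks_zero_zero]
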